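/- If Q is a shift-invariant linear operator on R[t] (commuting with all shifts E^a : p(t) ↦ p(t+a)) and Q·t is a nonzero constant c, then for every polynomial p of degree n ≥ 1, Qp has degree n − 1. -/
import Mathlib

open Polynomial Finset

section Aux
variable {F : Type*} [Field F] [CharZero F] (Q : F[X] →ₗ[F] F[X])

theorem aux_Q_one
    (hshift : ∀ (a : F) (p : F[X]), Q (p.comp (X + C a)) = (Q p).comp (X + C a))
    (c : F) (hQX : Q X = C c) : Q 1 = 0 := by
  have h := hshift 1 X
  rw [X_comp, hQX, C_comp, map_add, hQX] at h
  have h1 : Q (C 1) = 0 := by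
    have := add_eq_left.mp h
    exact this
  rwa [map_one] at h1

theorem aux_formula
    (hshift : ∀ (a : F) (p : F[X]), Q (p.comp (X + C a)) = (Q p).comp (X + C a))
    (n : ℕ) :
    Q (X ^ n) = ∑ k ∈ Finset.range (n + 1),
      C ((n.choose k : F) * (Q (X ^ k)).eval 0) * X ^ (n - k) := by
  apply Polynomial.funext
  intro a
  have h := hshift a (X ^ n)
  rw [pow_comp, X_comp] at h
  have hexp : (X + C a) ^ n =
      ∑ k ∈ Finset.range (n + 1), (((n.choose k : F)) * a ^ (n - k)) • X ^ k := by
    rw [add_pow]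
    refine Finset.sum_congr rfl fun k _ => ?_
    rw [smul_eq_C_mul, map_mul, map_pow, map_natCast C]
    ring
  have h0 := congrArg (Polynomial.eval 0) h
  rw [hexp, map_sum] at h0
  simp only [map_smul, eval_finset_sum, eval_smul, smul_eq_mul, eval_comp, eval_add, eval_X,
    eval_C, zero_add] at h0
  rw [← h0]
  simp only [eval_finset_sum, eval_mul, eval_C, eval_pow, eval_X]
  refine Finset.sum_congr rfl fun k _ => ?_
  ring
end Aux

section Aux2
variable {F : Type*} [Field F] [CharZero F] (Q : F[X] →ₗ[F] F[X])

theorem aux_deg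
    (hshift : ∀ (a : F) (p : F[X]), Q (p.comp (X + C a)) = (Q p).comp (X + C a))
    (c : F) (hc : c ≠ 0) (hQX : Q X = C c)
    (m : ℕ) : (Q (X ^ (m + 1))).degree = (m : WithBot ℕ) := by
  have hQ1 : Q 1 = 0 := aux_Q_one Q hshift c hQX
  have hf := aux_formula Q hshift (m + 1)
  have hzero0 : (Q (X ^ 0)).eval 0 = 0 := by
    rw [pow_zero, hQ1, eval_zero]
  have hle : (Q (X ^ (m + 1))).degree ≤ (m : WithBot ℕ) := by
    rw [hf]
    refine (Polynomial.degree_sum_le _ _).trans ?_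
    rw [Finset.sup_le_iff]
    intro k hk
    rcases Nat.eq_zero_or_pos k with rfl | hkpos
    · rw [hzero0, mul_zero, map_zero, zero_mul, degree_zero]
      exact bot_le
    · refine (Polynomial.degree_C_mul_X_pow_le _ _).trans ?_
      rw [Nat.cast_le]
      simp at hk
      omega
  have hcoeff : (Q (X ^ (m + 1))).coeff m = (((m + 1 : ℕ)) : F) * c := by
    rw [hf, Polynomial.finset_sum_coeff]
    have heval1 : (Q (X ^ 1)).eval 0 = c := by rw [pow_one, hQX, eval_C]
    rw [Finset.sum_eq_single 1]
    · rw [coeff_C_mul, coeff_X_pow, if_pos (by omega), mul_one, Nat.choose_one_right, heval1]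
    · intro k hk hne
      rw [coeff_C_mul, coeff_X_pow, if_neg, mul_zero]
      simp at hk
      omega
    · intro h
      exact absurd (by simp : 1 ∈ Finset.range (m + 2)) h
  have hne : (Q (X ^ (m + 1))).coeff m ≠ 0 := by
    rw [hcoeff]
    exact mul_ne_zero (Nat.cast_ne_zero.mpr (Nat.succ_ne_zero m)) hc
  exact le_antisymm hle (Polynomial.le_degree_of_ne_zero hne)
end Aux2


/-- If `Q` is a shift-invariant linear operator on `F[t]` and `Q t` is a
nonzero constant, then `Q` maps any polynomial of degree `n ≥ 1` to one of degree `n - 1`. -/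
theorem delta_operator_degree
    (F : Type*) [Field F] [CharZero F] (Q : F[X] →ₗ[F] F[X])
    (hshift : ∀ (a : F) (p : F[X]), Q (p.comp (X + C a)) = (Q p).comp (X + C a))
    (c : F) (hc : c ≠ 0) (hQX : Q X = C c) :
    ∀ (n : ℕ), 1 ≤ n → ∀ p : F[X], p.degree = n →
      (Q p).degree = ((n - 1 : ℕ) : WithBot ℕ) := by
  intro n hn p hp
  obtain ⟨m, rfl⟩ : ∃ m, n = m + 1 := ⟨n - 1, by omega⟩
  have hQ1 : Q 1 = 0 := aux_Q_one Q hshift c hQX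
  have hnd : p.natDegree = m + 1 := natDegree_eq_of_degree_eq_some hp
  have hps : p = ∑ i ∈ Finset.range (m + 2), C (p.coeff i) * X ^ i := by
    conv_lhs => rw [p.as_sum_range' (m + 2) (by omega)]
    simp [Polynomial.C_mul_X_pow_eq_monomial]
  have hQp : Q p = (∑ i ∈ Finset.range (m + 1), p.coeff i • Q (X ^ i))
      + p.coeff (m + 1) • Q (X ^ (m + 1)) := by
    conv_lhs => rw [hps]
    rw [← Finset.sum_range_succ (fun i => p.coeff i • Q (X ^ i)), map_sum]
    refine Finset.sum_congr rfl fun i _ => ?_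
    rw [← smul_eq_C_mul, map_smul]
  have hT : (p.coeff (m + 1) • Q (X ^ (m + 1))).degree = (m : WithBot ℕ) := by
    have hlc : p.coeff (m + 1) ≠ 0 := by
      rw [← hnd]
      exact Polynomial.coeff_ne_zero_of_eq_degree (by rw [hp, hnd])
    rw [smul_eq_C_mul, Polynomial.degree_mul, Polynomial.degree_C hlc, zero_add]
    exact aux_deg Q hshift c hc hQX m
  have hS : (∑ i ∈ Finset.range (m + 1), p.coeff i • Q (X ^ i)).degree
      < (m : WithBot ℕ) := by
    refine lt_of_le_of_lt (Polynomial.degree_sum_le _ _) ?_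
    rw [Finset.sup_lt_iff (by exact bot_lt_iff_ne_bot.mpr (by simp))]
    intro i hi
    rcases Nat.eq_zero_or_pos i with rfl | hipos
    · rw [pow_zero, hQ1, smul_zero, degree_zero]
      exact bot_lt_iff_ne_bot.mpr (by simp)
    · obtain ⟨j, rfl⟩ : ∃ j, i = j + 1 := ⟨i - 1, by omega⟩
      refine lt_of_le_of_lt (Polynomial.degree_smul_le _ _) ?_
      rw [aux_deg Q hshift c hc hQX j, Nat.cast_lt]
      simp at hi
      omega
  rw [hQp, Polynomial.degree_add_eq_right_of_degree_lt (by rw [hT]; exact hS), hT]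
  norm_num
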